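/- Generalized binomial product inequality. Let 0 < q < p < 1 and let ρ = √((1-p)/(1-q)). Then for every integer n ≥ 1: ρ^{2n} · ∏_{m=1}^{2n-1} (m - q) ≤ ∏_{m=1}^{2n-1} (m - p). Equivalently, (p/q)·C(q,2n)·ρ^{2n} ≥ C(p,2n), where C(r,2n) = r(r-1)⋯(r-2n+1)/(2n)! denotes the generalized binomial coefficient. -/

import Mathlib

open Finset

/-- **Generalized binomial product inequality.** Let `0 < q < p < 1` and
`ρ = √((1-p)/(1-q))`. Then for every integer `n ≥ 1`:
`ρ^{2n} ∏_{m=1}^{2n-1} (m - q) ≤ ∏_{m=1}^{2n-1} (m - p)`, and equivalently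
`(p/q) C(q,2n) ρ^{2n} ≥ C(p,2n)`, where `C(r,k) = r(r-1)⋯(r-k+1)/k!` is the
generalized binomial coefficient. -/
theorem generalized_binomial_product_inequality (p q ρ : ℝ)
    (hq : 0 < q) (hqp : q < p) (hp : p < 1)
    (hρ : ρ = Real.sqrt ((1 - p) / (1 - q))) (n : ℕ) (hn : 1 ≤ n) :
    ρ ^ (2 * n) * ∏ m ∈ Finset.Icc 1 (2 * n - 1), ((m : ℝ) - q) ≤
        (∏ m ∈ Finset.Icc 1 (2 * n - 1), ((m : ℝ) - p)) ∧
      (∏ j ∈ Finset.range (2 * n), (p - (j : ℝ))) / (Nat.factorial (2 * n) : ℝ) ≤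
        (p / q) * ((∏ j ∈ Finset.range (2 * n), (q - (j : ℝ))) /
          (Nat.factorial (2 * n) : ℝ)) * ρ ^ (2 * n) := by
  have h1q : (0:ℝ) < 1 - q := by linarith
  have h1p : (0:ℝ) < 1 - p := by linarith
  set r : ℝ := (1 - p) / (1 - q) with hr
  have hr0 : 0 < r := div_pos h1p h1q
  have hρ2 : ρ ^ (2 * n) = r ^ n := by
    rw [hρ, pow_mul, Real.sq_sqrt hr0.le]
  -- the pair inequality
  have pair : ∀ m : ℕ, 2 ≤ m →
      r * (((m:ℝ) - q) * (((m:ℝ) + 1) - q)) ≤ ((m:ℝ) - p) * (((m:ℝ) + 1) - p) := by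
    intro m hm
    have hm2 : (2:ℝ) ≤ (m:ℝ) := by exact_mod_cast hm
    have hpq : (0:ℝ) ≤ p - q := by linarith
    have hmm : (0:ℝ) ≤ ((m:ℝ) - 2) * ((m:ℝ) + 1) := by nlinarith
    have hpqq : (0:ℝ) ≤ p + q - p * q := by nlinarith [mul_pos hq h1q]
    rw [hr, div_mul_eq_mul_div, div_le_iff₀ h1q]
    nlinarith [mul_nonneg hpq hmm, mul_nonneg hpq hpqq]
  -- positivity of products
  have hposq : ∀ k : ℕ, 0 < ∏ m ∈ Icc 1 k, ((m:ℝ) - q) := by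
    intro k
    refine prod_pos fun m hm => ?_
    have h1 : 1 ≤ m := (mem_Icc.mp hm).1
    have : (1:ℝ) ≤ (m:ℝ) := by exact_mod_cast h1
    linarith
  -- the key product inequality, by induction
  have key : ∀ k : ℕ, 1 ≤ k →
      r ^ k * ∏ m ∈ Icc 1 (2 * k - 1), ((m:ℝ) - q) ≤
        ∏ m ∈ Icc 1 (2 * k - 1), ((m:ℝ) - p) := by
    intro k hk
    induction k, hk using Nat.le_induction with
    | base =>
      simp only [pow_one]
      norm_num
      rw [hr, div_mul_cancel₀ _ h1q.ne']
    | succ k hk ih =>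
      have e1 : 2 * (k + 1) - 1 = (2 * k) + 1 := by omega
      have e2 : 2 * k = (2 * k - 1) + 1 := by omega
      rw [e1, prod_Icc_succ_top (by omega) (fun m => ((m:ℝ) - q)),
        prod_Icc_succ_top (by omega) (fun m => ((m:ℝ) - p)),
        e2, prod_Icc_succ_top (by omega) (fun m => ((m:ℝ) - q)),
        prod_Icc_succ_top (by omega) (fun m => ((m:ℝ) - p)), ← e2]
      have hpair := pair (2 * k) (by omega)
      have hcast : ((2 * k + 1 : ℕ) : ℝ) = ((2 * k : ℕ) : ℝ) + 1 := by push_cast; ring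
      rw [hcast]
      have hf2k : (0:ℝ) < ((2 * k : ℕ):ℝ) - q := by
        have : (1:ℝ) ≤ ((2 * k : ℕ):ℝ) := by exact_mod_cast (by omega : 1 ≤ 2 * k)
        linarith
      have hf2k1 : (0:ℝ) < (((2 * k : ℕ):ℝ) + 1) - q := by linarith
      calc r ^ (k + 1) * ((∏ m ∈ Icc 1 (2 * k - 1), ((m:ℝ) - q)) * (((2 * k : ℕ):ℝ) - q)
              * ((((2 * k : ℕ):ℝ) + 1) - q))
          = (r ^ k * ∏ m ∈ Icc 1 (2 * k - 1), ((m:ℝ) - q)) *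
              (r * ((((2 * k : ℕ):ℝ) - q) * ((((2 * k : ℕ):ℝ) + 1) - q))) := by ring
        _ ≤ (∏ m ∈ Icc 1 (2 * k - 1), ((m:ℝ) - p)) *
              ((((2 * k : ℕ):ℝ) - p) * ((((2 * k : ℕ):ℝ) + 1) - p)) := by
            have hposp : (0:ℝ) < ∏ m ∈ Icc 1 (2 * k - 1), ((m:ℝ) - p) := by
              refine prod_pos fun m hm => ?_
              have h1 : 1 ≤ m := (mem_Icc.mp hm).1
              have : (1:ℝ) ≤ (m:ℝ) := by exact_mod_cast h1
              linarith
            exact mul_le_mul ih hpair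
              (mul_nonneg hr0.le (mul_nonneg hf2k.le hf2k1.le)) hposp.le
        _ = (∏ m ∈ Icc 1 (2 * k - 1), ((m:ℝ) - p)) * (((2 * k : ℕ):ℝ) - p)
              * ((((2 * k : ℕ):ℝ) + 1) - p) := by ring
  have part1 := key n hn
  refine ⟨by rw [hρ2]; exact part1, ?_⟩
  -- rewrite the range products
  have hflip : ∀ x : ℝ, ∏ j ∈ range (2 * n), (x - (j:ℝ)) =
      x * ((-1) ^ (2 * n - 1) * ∏ m ∈ Icc 1 (2 * n - 1), ((m:ℝ) - x)) := by
    intro x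
    rw [prod_range_eq_mul_Ico _ (by omega : 0 < 2 * n)]
    have hIco : Ico 1 (2 * n) = Icc 1 (2 * n - 1) := by
      rw [← Finset.Ico_add_one_right_eq_Icc]; congr 1; omega
    rw [hIco, Nat.cast_zero, sub_zero]
    congr 1
    calc ∏ m ∈ Icc 1 (2 * n - 1), (x - (m:ℝ))
        = ∏ m ∈ Icc 1 (2 * n - 1), (-1) * ((m:ℝ) - x) :=
          prod_congr rfl (fun m _ => by ring)
      _ = (-1) ^ (Icc 1 (2 * n - 1)).card * ∏ m ∈ Icc 1 (2 * n - 1), ((m:ℝ) - x) := by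
          rw [prod_mul_distrib, prod_const]
      _ = (-1) ^ (2 * n - 1) * ∏ m ∈ Icc 1 (2 * n - 1), ((m:ℝ) - x) := by
          rw [Nat.card_Icc]; norm_num
  have hodd : ((-1 : ℝ)) ^ (2 * n - 1) = -1 := by
    have : 2 * n - 1 = 2 * (n - 1) + 1 := by omega
    rw [this]; simp [pow_succ, pow_mul]
  set A : ℝ := ∏ m ∈ Icc 1 (2 * n - 1), ((m:ℝ) - p) with hA
  set B : ℝ := ∏ m ∈ Icc 1 (2 * n - 1), ((m:ℝ) - q) with hB
  have hPA : ∏ j ∈ range (2 * n), (p - (j:ℝ)) = -(p * A) := by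
    rw [hflip p, hodd]; ring
  have hQB : ∏ j ∈ range (2 * n), (q - (j:ℝ)) = -(q * B) := by
    rw [hflip q, hodd]; ring
  rw [hPA, hQB, hρ2]
  have hN : (0:ℝ) < (Nat.factorial (2 * n) : ℝ) := by
    exact_mod_cast Nat.factorial_pos _
  have hrhs : p / q * (-(q * B) / (Nat.factorial (2 * n) : ℝ)) * r ^ n
      = -(p * (r ^ n * B)) / (Nat.factorial (2 * n) : ℝ) := by
    field_simp
  rw [hrhs, neg_div, neg_div, neg_le_neg_iff]
  exact (div_le_div_iff_of_pos_right hN).mpr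
    (mul_le_mul_of_nonneg_left part1 (le_of_lt (hq.trans hqp)))
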